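/- arXiv:1202.4875 — 2 statements merged into one kernel-verified Lean document; each statement's English description precedes it below -/
import Mathlib

section
/- For f ∈ L^2 which is ℱ_0-measurable, with f_i = P_0(f∘θ^i), S_n(f) = ∑_{j=1}^n f∘θ^j, and S̄_n(f) = S_n(f) − E_0(S_n(f)), one has the identity S̄_n(f) = ∑_{i=0}^{n-1} ∑_{j=1}^{n-i} (f_i)∘θ^j, where the inner sums converge in L^2. -/
/-!
Since `θ` preserves `μ` and `ℱ_{k+j} = θ^{-j} ℱ_k`, conditional expectation commutes with
composition by `θ^j`, so `f_i ∘ θ^j = E_j(f ∘ θ^{i+j}) - E_{j-1}(f ∘ θ^{i+j})`. Grouping the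
double sum by `k = i + j`, the inner sum over `j` telescopes to `E_k(f ∘ θ^k) - E_0(f ∘ θ^k)`,
and `E_k(f ∘ θ^k) = f ∘ θ^k` because `f ∘ θ^k` is `ℱ_k`-measurable.
-/

open MeasureTheory

namespace Finset

variable {M : Type*} [AddCommGroup M]

theorem sum_Icc_one_sub_pred (b : ℤ → M) (k : ℕ) :
    ∑ j ∈ Icc 1 k, (b j - b (j - 1)) = b k - b 0 := by
  induction k with
  | zero => simp
  | succ k ih =>
    rw [sum_Icc_succ_top (Nat.le_add_left 1 k), ih]
    push_cast
    abel_nf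

theorem sum_range_sum_Icc_add (n : ℕ) (h : ℕ → ℕ → M) :
    ∑ i ∈ range n, ∑ j ∈ Icc 1 (n - i), h (i + j) j =
      ∑ k ∈ Icc 1 n, ∑ j ∈ Icc 1 k, h k j := by
  rw [sum_sigma', sum_sigma']
  refine sum_nbij' (fun p => ⟨p.1 + p.2, p.2⟩) (fun p => ⟨p.1 - p.2, p.2⟩) ?_ ?_ ?_ ?_ ?_ <;>
    rintro ⟨a, b⟩ hp <;> simp_all [mem_sigma] <;> omega

end Finset

open Finset

theorem MeasureTheory.MeasurePreserving.condExp_comp {X Y : Type*} {mX : MeasurableSpace X}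
    {m mY : MeasurableSpace Y} {μ : Measure X} {ν : Measure Y} [IsFiniteMeasure μ]
    [IsFiniteMeasure ν] {θ : X → Y} (hθ : MeasurePreserving θ μ ν) (hm : m ≤ mY)
    {g : Y → ℝ} (hg : Integrable g ν) :
    (fun x => (ν[g|m]) (θ x)) =ᵐ[μ] μ[fun x => g (θ x)|m.comap θ] := by
  have hθm := hθ.measurable
  have setIntegral_comp : ∀ {h : Y → ℝ}, AEStronglyMeasurable h ν → ∀ {t : Set Y},
      MeasurableSet[m] t → ∫ x in θ ⁻¹' t, h (θ x) ∂μ = ∫ y in t, h y ∂ν := fun hh _ ht => by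
    rw [← hθ.map_eq] at hh ⊢
    exact (setIntegral_map (hm _ ht) hh hθm.aemeasurable).symm
  refine ae_eq_condExp_of_forall_setIntegral_eq
    ((MeasurableSpace.comap_mono hm).trans hθm.comap_le) (hθ.integrable_comp_of_integrable hg)
    (fun _ _ _ => (hθ.integrable_comp_of_integrable integrable_condExp).integrableOn) ?_
    (stronglyMeasurable_condExp.comp_measurable (comap_measurable θ)).aestronglyMeasurable
  rintro _ ⟨t, ht, rfl⟩ _
  rw [setIntegral_comp (stronglyMeasurable_condExp.mono hm).aestronglyMeasurable ht,
    setIntegral_comp hg.1 ht, setIntegral_condExp hm hg ht]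

section Filtration

variable {X : Type*} {θ : X → X} {F : ℤ → MeasurableSpace X}

theorem comap_iterate_of_comap_succ (hFθ : ∀ n, F (n + 1) = (F n).comap θ) (k : ℤ) (j : ℕ) :
    F (k + j) = (F k).comap θ^[j] := by
  induction j with
  | zero => simp
  | succ j ih =>
    rw [Nat.cast_succ, ← add_assoc, hFθ, ih, MeasurableSpace.comap_comp, Function.iterate_succ]

variable [m0 : MeasurableSpace X] {μ : Measure X}

theorem condExp_comp_iterate [IsFiniteMeasure μ] (hθ : MeasurePreserving θ μ μ)
    (hFle : ∀ n, F n ≤ m0) (hFθ : ∀ n, F (n + 1) = (F n).comap θ) {g : X → ℝ}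
    (hg : Integrable g μ) (k : ℤ) (j : ℕ) :
    (fun x => (μ[g|F k]) (θ^[j] x)) =ᵐ[μ] μ[fun x => g (θ^[j] x)|F (k + j)] := by
  rw [comap_iterate_of_comap_succ hFθ]
  exact (hθ.iterate j).condExp_comp (hFle k) hg

theorem sub_condExp_eq_sum_Icc [IsFiniteMeasure μ] (hFle : ∀ n, F n ≤ m0) {g : X → ℝ} {k : ℕ}
    (hg : StronglyMeasurable[F k] g) (hgi : Integrable g μ) :
    g - μ[g|F 0] = ∑ j ∈ Icc 1 k, (μ[g|F j] - μ[g|F (j - 1)]) := by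
  rw [sum_Icc_one_sub_pred (fun j => μ[g|F j]), condExp_of_stronglyMeasurable (hFle k) hg hgi]

end Filtration

theorem centered_partial_sum_decomposition_general
    {X : Type*} [m0 : MeasurableSpace X] (μ : Measure X) [IsProbabilityMeasure μ]
    (θ : X → X) (hθ : MeasurePreserving θ μ μ)
    (F : ℤ → MeasurableSpace X) (hFle : ∀ n, F n ≤ m0)
    (hFθ : ∀ n : ℤ, F (n + 1) = (F n).comap θ)
    (f : X → ℝ) (hf : MemLp f 2 μ) (hfmeas : StronglyMeasurable[F 0] f) :
    ∀ n : ℕ, 1 ≤ n →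
      (fun x => (∑ j ∈ Finset.Icc 1 n, f (θ^[j] x)) -
          (μ[fun y => ∑ j ∈ Finset.Icc 1 n, f (θ^[j] y)|F 0]) x) =ᵐ[μ]
        fun x => ∑ i ∈ Finset.range n, ∑ j ∈ Finset.Icc 1 (n - i),
          (μ[fun y => f (θ^[i] y)|F 0] - μ[fun y => f (θ^[i] y)|F (-1)]) (θ^[j] x) := by
  intro n _
  have hint (i : ℕ) : Integrable (fun x => f (θ^[i] x)) μ :=
    (hθ.iterate i).integrable_comp_of_integrable (hf.integrable one_le_two)
  have hmeas (i : ℕ) : StronglyMeasurable[F i] (fun x => f (θ^[i] x)) := by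
    rw [← zero_add (i : ℤ), comap_iterate_of_comap_succ hFθ]
    exact hfmeas.comp_measurable (comap_measurable _)
  have hshift : ∀ᵐ x ∂μ, ∀ i j : ℕ,
      (μ[fun y => f (θ^[i] y)|F 0] - μ[fun y => f (θ^[i] y)|F (-1)]) (θ^[j] x) =
        (μ[fun y => f (θ^[i + j] y)|F j] - μ[fun y => f (θ^[i + j] y)|F (j - 1)]) x := by
    refine ae_all_iff.2 fun i => ae_all_iff.2 fun j => ?_
    filter_upwards [condExp_comp_iterate hθ hFle hFθ (hint i) 0 j,
      condExp_comp_iterate hθ hFle hFθ (hint i) (-1) j] with x h0 h1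
    simp only [Pi.sub_apply, h0, h1, zero_add, neg_add_eq_sub, ← Function.iterate_add_apply]
  filter_upwards [condExp_finsetSum (s := Icc 1 n) (fun j _ => hint j) (F 0), hshift]
    with x hsum hx
  rw [sum_fn] at hsum
  simp only [hx]
  rw [sum_range_sum_Icc_add n
      (fun k j => (μ[fun y => f (θ^[k] y)|F j] - μ[fun y => f (θ^[k] y)|F (j - 1)]) x),
    hsum, Finset.sum_apply, ← sum_sub_distrib]
  refine sum_congr rfl fun k _ => ?_
  simpa only [Pi.sub_apply, Finset.sum_apply] using
    congrFun (sub_condExp_eq_sum_Icc hFle (hmeas k) (hint k)) x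

/-- Identity `S̄_n(f) = ∑_{i=0}^{n-1} ∑_{j=1}^{n-i} f_i ∘ θ^j`, where `f_i = P_0(f ∘ θ^i)`,
`S_n(f) = ∑_{j=1}^n f ∘ θ^j` and `S̄_n(f) = S_n(f) − E_0(S_n(f))`. -/
theorem centered_partial_sum_decomposition
    {X : Type*} [m0 : MeasurableSpace X] (μ : Measure X) [IsProbabilityMeasure μ]
    (θ θi : X → X) (hθ : MeasurePreserving θ μ μ) (hθi : MeasurePreserving θi μ μ)
    (hinv1 : Function.LeftInverse θi θ) (hinv2 : Function.RightInverse θi θ)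
    (F : ℤ → MeasurableSpace X) (hFle : ∀ n, F n ≤ m0) (hFmono : Monotone F)
    (hFθ : ∀ n : ℤ, F (n + 1) = (F n).comap θ)
    (f : X → ℝ) (hf : MemLp f 2 μ) (hfmeas : StronglyMeasurable[F 0] f) :
    ∀ n : ℕ, 1 ≤ n →
      (fun x => (∑ j ∈ Finset.Icc 1 n, f (θ^[j] x)) -
          (μ[fun y => ∑ j ∈ Finset.Icc 1 n, f (θ^[j] y)|F 0]) x) =ᵐ[μ]
        fun x => ∑ i ∈ Finset.range n, ∑ j ∈ Finset.Icc 1 (n - i),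
          (μ[fun y => f (θ^[i] y)|F 0] - μ[fun y => f (θ^[i] y)|F (-1)]) (θ^[j] x) :=
  centered_partial_sum_decomposition_general (m0 := m0) μ θ hθ F hFle hFθ f hf hfmeas
end

section
/- Under the Hannan condition on an ℱ_0-measurable f ∈ L^2, the limit σ^2 = lim_n E(S̄_n^2)/n exists, and equals ‖m‖_2^2 where m = ∑_{k≥0} P_0(f∘θ^k). -/
open MeasureTheory Filter Topology ENNReal

/-!
Write `S̄_n = S_n - E(S_n | ℱ_0)` as the telescoping sum of the martingale increments
`E(S_n | ℱ_{j+1}) - E(S_n | ℱ_j)`, `j < n`, which are orthogonal in `L²`. Since `f` is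
`ℱ_0`-measurable and `ℱ_{j+1} = θ^{-(j+1)} ℱ_0`, the `j`-th increment is `M_{n-j} ∘ θ^{j+1}` with
`M_K = ∑_{k<K} P_0(f ∘ θ^k)`; as `θ` preserves `μ`, `E(S̄_n²) = ∑_{K=1}^n ‖M_K‖₂²`.
Finally `M_K → m` in `L²` gives `‖M_K‖₂² → ‖m‖₂²`, and Cesàro averaging concludes.
-/

namespace Finset

lemma sum_Icc_eq_sum_filter_le_add_sum_range {M : Type*} [AddCommMonoid M] (h : ℕ → M)
    (n j : ℕ) :
    ∑ i ∈ Icc 1 n, h i =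
      ∑ i ∈ Icc 1 n with i ≤ j, h i + ∑ k ∈ range (n - j), h (k + (j + 1)) := by
  rw [← sum_filter_add_sum_filter_not (Icc 1 n) (· ≤ j)]
  congr 1
  refine sum_nbij' (fun i => i - (j + 1)) (fun k => k + (j + 1)) ?_ ?_ ?_ ?_ ?_ <;>
    simp only [mem_filter, mem_Icc, mem_range] <;> intros <;> first | omega | congr 1; omega

end Finset

namespace MeasureTheory

variable {X : Type*} {m m' m0 : MeasurableSpace X} {μ : Measure X}

lemma integral_sq_eq_norm_toLp_sq {g : X → ℝ} (hg : MemLp g 2 μ) :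
    ∫ x, g x ^ 2 ∂μ = ‖hg.toLp g‖ ^ 2 := by
  rw [← real_inner_self_eq_norm_sq, L2.inner_def]
  refine integral_congr_ae ?_
  filter_upwards [hg.coeFn_toLp] with x hx
  rw [hx, real_inner_self_eq_norm_sq, Real.norm_eq_abs, sq_abs]

lemma tendsto_integral_sq_of_tendsto_eLpNorm_sub {ι : Type*} {l : Filter ι} {g : ι → X → ℝ}
    {g' : X → ℝ} (hg : ∀ i, MemLp (g i) 2 μ) (hg' : MemLp g' 2 μ)
    (h : Tendsto (fun i => eLpNorm (g' - g i) 2 μ) l (𝓝 0)) :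
    Tendsto (fun i => ∫ x, g i x ^ 2 ∂μ) l (𝓝 (∫ x, g' x ^ 2 ∂μ)) := by
  simp_rw [eLpNorm_sub_comm g'] at h
  have hLp := (Lp.tendsto_Lp_iff_tendsto_eLpNorm'' g hg g' hg').2 h
  simp only [integral_sq_eq_norm_toLp_sq (hg _), integral_sq_eq_norm_toLp_sq hg']
  exact hLp.norm.pow 2

lemma integral_sq_sum_of_orthogonal {ι : Type*} (s : Finset ι) {D : ι → X → ℝ}
    (hD : ∀ i ∈ s, MemLp (D i) 2 μ)
    (horth : ∀ i ∈ s, ∀ j ∈ s, i ≠ j → ∫ x, D i x * D j x ∂μ = 0) :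
    ∫ x, (∑ i ∈ s, D i x) ^ 2 ∂μ = ∑ i ∈ s, ∫ x, D i x ^ 2 ∂μ := by
  have hint : ∀ i ∈ s, ∀ j ∈ s, Integrable (fun x => D i x * D j x) μ :=
    fun i hi j hj => (hD i hi).integrable_mul (hD j hj)
  calc ∫ x, (∑ i ∈ s, D i x) ^ 2 ∂μ
      = ∫ x, ∑ i ∈ s, ∑ j ∈ s, D i x * D j x ∂μ := by simp_rw [sq, Finset.sum_mul_sum]
    _ = ∑ i ∈ s, ∑ j ∈ s, ∫ x, D i x * D j x ∂μ := by
        rw [integral_finsetSum _ fun i hi => integrable_finsetSum _ (hint i hi)]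
        exact Finset.sum_congr rfl fun i hi => integral_finsetSum _ (hint i hi)
    _ = ∑ i ∈ s, ∫ x, D i x ^ 2 ∂μ := by
        refine Finset.sum_congr rfl fun i hi => ?_
        rw [Finset.sum_eq_single_of_mem i hi fun j hj hji => horth i hi j hj hji.symm]
        simp_rw [sq]

lemma integral_mul_condExp_sub_condExp_eq_zero [IsFiniteMeasure μ] (hmm' : m ≤ m')
    (hm' : m' ≤ m0) {h g : X → ℝ} (hh : StronglyMeasurable[m] h) (hh2 : MemLp h 2 μ)
    (hg : MemLp g 2 μ) :
    ∫ x, h x * (μ[g|m'] x - μ[g|m] x) ∂μ = 0 := by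
  have hm : m ≤ m0 := hmm'.trans hm'
  set D := μ[g|m'] - μ[g|m]
  have hD : MemLp D 2 μ := (hg.condExp one_le_two).sub (hg.condExp one_le_two)
  have hcondD : μ[D|m] =ᵐ[μ] 0 := by
    filter_upwards [condExp_sub (μ := μ) (integrable_condExp (f := g) (m := m'))
        (integrable_condExp (f := g) (m := m)) m,
      condExp_condExp_of_le (f := g) hmm' hm'] with x h1 h2
    rw [h1, Pi.sub_apply, h2, condExp_of_stronglyMeasurable hm stronglyMeasurable_condExp
      integrable_condExp, Pi.zero_apply, sub_self]
  calc ∫ x, h x * (μ[g|m'] x - μ[g|m] x) ∂μ = ∫ x, μ[h * D|m] x ∂μ :=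
        (integral_condExp hm).symm
    _ = ∫ x, (h * μ[D|m]) x ∂μ := integral_congr_ae <|
        condExp_mul_of_stronglyMeasurable_left hh (hh2.integrable_mul hD)
          (hD.integrable one_le_two)
    _ = 0 := by
        rw [integral_congr_ae (EventuallyEq.rfl.mul hcondD)]
        simp

lemma integral_sq_condExp_sub_condExp_zero_eq_sum [IsFiniteMeasure μ] (ℱ : Filtration ℕ m0)
    {g : X → ℝ} (hg : MemLp g 2 μ) (n : ℕ) :
    ∫ x, (μ[g|ℱ n] x - μ[g|ℱ 0] x) ^ 2 ∂μ =
      ∑ j ∈ Finset.range n, ∫ x, (μ[g|ℱ (j + 1)] x - μ[g|ℱ j] x) ^ 2 ∂μ := by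
  have hincr : ∀ j, MemLp (fun x => μ[g|ℱ (j + 1)] x - μ[g|ℱ j] x) 2 μ :=
    fun j => (hg.condExp one_le_two).sub (hg.condExp one_le_two)
  have horth : ∀ i j, i < j →
      ∫ x, (μ[g|ℱ (i + 1)] x - μ[g|ℱ i] x) * (μ[g|ℱ (j + 1)] x - μ[g|ℱ j] x) ∂μ = 0 :=
    fun i j hij => integral_mul_condExp_sub_condExp_eq_zero (ℱ.mono j.le_succ) (ℱ.le _)
      ((stronglyMeasurable_condExp.mono (ℱ.mono hij)).sub
        (stronglyMeasurable_condExp.mono (ℱ.mono hij.le))) (hincr i) hg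
  have htel : ∀ x, μ[g|ℱ n] x - μ[g|ℱ 0] x =
      ∑ j ∈ Finset.range n, (μ[g|ℱ (j + 1)] x - μ[g|ℱ j] x) :=
    fun x => (Finset.sum_range_sub (fun j => μ[g|ℱ j] x) n).symm
  simp_rw [htel]
  refine integral_sq_sum_of_orthogonal _ (fun j _ => hincr j) fun i _ j _ hij => ?_
  rcases hij.lt_or_gt with h | h
  · exact horth i j h
  · simpa only [mul_comm] using horth j i h

lemma MeasurePreserving.integral_comp_of_aestronglyMeasurable {Y E : Type*}
    [NormedAddCommGroup E] [NormedSpace ℝ E] {mY : MeasurableSpace Y} {ν : Measure Y}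
    {φ : X → Y} (hφ : MeasurePreserving φ μ ν) {g : Y → E} (hg : AEStronglyMeasurable g ν) :
    ∫ x, g (φ x) ∂μ = ∫ y, g y ∂ν := by
  rw [← hφ.map_eq] at hg ⊢
  exact (integral_map hφ.aemeasurable hg).symm

lemma MeasurePreserving.condExp_comp_ae_eq {Y : Type*} {mm mY : MeasurableSpace Y}
    {ν : Measure Y} [IsFiniteMeasure μ] [IsFiniteMeasure ν] {φ : X → Y}
    (hφ : MeasurePreserving φ μ ν) (hmm : mm ≤ mY) {g : Y → ℝ} (hg : Integrable g ν) :
    (fun x => ν[g|mm] (φ x)) =ᵐ[μ] μ[fun x => g (φ x)|mm.comap φ] := by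
  have setIntegral_preimage : ∀ {h : Y → ℝ}, AEStronglyMeasurable h ν →
      ∀ {t}, MeasurableSet t → ∫ x in φ ⁻¹' t, h (φ x) ∂μ = ∫ y in t, h y ∂ν := fun hh t ht =>
    (hφ.restrict_preimage ht).integral_comp_of_aestronglyMeasurable hh.restrict
  refine ae_eq_condExp_of_forall_setIntegral_eq
    ((MeasurableSpace.comap_mono hmm).trans hφ.measurable.comap_le)
    (hφ.integrable_comp_of_integrable hg)
    (fun s _ _ => (hφ.integrable_comp_of_integrable integrable_condExp).integrableOn) ?_ ?_
  · rintro _ ⟨t, ht, rfl⟩ -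
    rw [setIntegral_preimage integrable_condExp.aestronglyMeasurable (hmm t ht),
      setIntegral_preimage hg.aestronglyMeasurable (hmm t ht), setIntegral_condExp hmm hg ht]
  · exact (stronglyMeasurable_condExp.comp_measurable
      (Measurable.of_comap_le le_rfl)).aestronglyMeasurable

end MeasureTheory

section Stationary

open Finset

variable {X : Type*} {m0 : MeasurableSpace X} {μ : Measure X} {θ : X → X}
  {F : ℤ → MeasurableSpace X}

lemma eq_comap_iterate (hFθ : ∀ n, F (n + 1) = (F n).comap θ) (n : ℤ) (j : ℕ) :
    F (n + j) = (F n).comap θ^[j] := by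
  induction j with
  | zero => simp [MeasurableSpace.comap_id]
  | succ j ih =>
    rw [Nat.cast_succ, ← add_assoc, hFθ, ih, MeasurableSpace.comap_comp, ← Function.iterate_succ]

lemma stronglyMeasurable_comp_iterate (hFθ : ∀ n, F (n + 1) = (F n).comap θ) {n : ℤ}
    {g : X → ℝ} (hg : StronglyMeasurable[F n] g) (j : ℕ) :
    StronglyMeasurable[F (n + j)] (fun x => g (θ^[j] x)) := by
  rw [eq_comap_iterate hFθ]
  exact hg.comp_measurable (Measurable.of_comap_le le_rfl)

/-- The operator `P_n` of the paper. -/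
noncomputable def condExpDiff (μ : Measure X) (F : ℤ → MeasurableSpace X) (n : ℤ)
    (g : X → ℝ) : X → ℝ :=
  μ[g|F n] - μ[g|F (n - 1)]

lemma condExpDiff_add {g h : X → ℝ} (hg : Integrable g μ) (hh : Integrable h μ) (n : ℤ) :
    condExpDiff μ F n (g + h) =ᵐ[μ] condExpDiff μ F n g + condExpDiff μ F n h := by
  filter_upwards [condExp_add hg hh (F n), condExp_add hg hh (F (n - 1))] with x h1 h2
  simp only [condExpDiff, Pi.sub_apply, Pi.add_apply, h1, h2]
  ring

lemma condExpDiff_finsetSum {ι : Type*} {s : Finset ι} {g : ι → X → ℝ}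
    (hg : ∀ i ∈ s, Integrable (g i) μ) (n : ℤ) :
    condExpDiff μ F n (fun x => ∑ i ∈ s, g i x) =ᵐ[μ]
      fun x => ∑ i ∈ s, condExpDiff μ F n (g i) x := by
  rw [show (fun x => ∑ i ∈ s, g i x) = ∑ i ∈ s, g i by ext; simp]
  filter_upwards [condExp_finsetSum hg (F n), condExp_finsetSum hg (F (n - 1))] with x h1 h2
  simp only [condExpDiff, Pi.sub_apply, h1, h2, Finset.sum_apply, sum_sub_distrib]

lemma memLp_condExpDiff {g : X → ℝ} (hg : MemLp g 2 μ) (n : ℤ) :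
    MemLp (condExpDiff μ F n g) 2 μ :=
  (hg.condExp one_le_two).sub (hg.condExp one_le_two)

variable [IsFiniteMeasure μ]

lemma condExpDiff_eq_zero (hFle : ∀ n, F n ≤ m0) (hFmono : Monotone F) {n : ℤ} {g : X → ℝ}
    (hg : StronglyMeasurable[F (n - 1)] g) (hgi : Integrable g μ) :
    condExpDiff μ F n g = 0 := by
  rw [condExpDiff, condExp_of_stronglyMeasurable (hFle _) hg hgi,
    condExp_of_stronglyMeasurable (hFle _) (hg.mono (hFmono (Int.sub_le_self n zero_le_one)))
      hgi, sub_self]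

lemma condExpDiff_comp_iterate (hθ : MeasurePreserving θ μ μ)
    (hFθ : ∀ n, F (n + 1) = (F n).comap θ) (hFle : ∀ n, F n ≤ m0) {g : X → ℝ}
    (hg : Integrable g μ) (n : ℤ) (j : ℕ) :
    (fun x => condExpDiff μ F n g (θ^[j] x)) =ᵐ[μ]
      condExpDiff μ F (n + j) (fun x => g (θ^[j] x)) := by
  have hshift : n + j - 1 = n - 1 + j := by ring
  rw [condExpDiff, condExpDiff, hshift, eq_comap_iterate hFθ, eq_comap_iterate hFθ]
  filter_upwards [(hθ.iterate j).condExp_comp_ae_eq (hFle n) hg,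
    (hθ.iterate j).condExp_comp_ae_eq (hFle (n - 1)) hg] with x h1 h2
  simp only [Pi.sub_apply, h1, h2]

lemma condExpDiff_sum_iterate (hθ : MeasurePreserving θ μ μ)
    (hFθ : ∀ n, F (n + 1) = (F n).comap θ) (hFle : ∀ n, F n ≤ m0) (hFmono : Monotone F)
    {f : X → ℝ} (hf : Integrable f μ) (hfm : StronglyMeasurable[F 0] f) (n j : ℕ) :
    condExpDiff μ F (j + 1 : ℕ) (fun x => ∑ i ∈ Icc 1 n, f (θ^[i] x)) =ᵐ[μ]
      fun x => ∑ k ∈ range (n - j),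
        condExpDiff μ F 0 (fun z => f (θ^[k] z)) (θ^[j + 1] x) := by
  have hfi : ∀ i, Integrable (fun x => f (θ^[i] x)) μ :=
    fun i => (hθ.iterate i).integrable_comp_of_integrable hf
  set G : X → ℝ := fun z => ∑ k ∈ range (n - j), f (θ^[k] z)
  have hG : Integrable G μ := integrable_finsetSum _ fun k _ => hfi k
  have hsplit : (fun x => ∑ i ∈ Icc 1 n, f (θ^[i] x)) =
      (fun x => ∑ i ∈ Icc 1 n with i ≤ j, f (θ^[i] x)) + fun x => G (θ^[j + 1] x) := by
    ext x
    simp only [Pi.add_apply, G, sum_Icc_eq_sum_filter_le_add_sum_range _ n j,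
      Function.iterate_add_apply]
  have hpastInt : Integrable (fun x => ∑ i ∈ Icc 1 n with i ≤ j, f (θ^[i] x)) μ :=
    integrable_finsetSum _ fun i _ => hfi i
  have hfutureInt : Integrable (fun x => G (θ^[j + 1] x)) μ :=
    (hθ.iterate (j + 1)).integrable_comp_of_integrable hG
  have hpast : condExpDiff μ F (j + 1 : ℕ) (fun x => ∑ i ∈ Icc 1 n with i ≤ j, f (θ^[i] x))
      = 0 := by
    refine condExpDiff_eq_zero hFle hFmono
      (Finset.stronglyMeasurable_fun_sum _ fun i hi => ?_) hpastInt
    refine (stronglyMeasurable_comp_iterate hFθ hfm i).mono (hFmono ?_)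
    have := (mem_filter.1 hi).2
    push_cast
    omega
  have hfuture : condExpDiff μ F (j + 1 : ℕ) (fun x => G (θ^[j + 1] x)) =ᵐ[μ]
      fun x => condExpDiff μ F 0 G (θ^[j + 1] x) := by
    simpa only [zero_add] using (condExpDiff_comp_iterate hθ hFθ hFle hG 0 (j + 1)).symm
  have hGsum := (hθ.iterate (j + 1)).quasiMeasurePreserving.ae_eq_comp
    (condExpDiff_finsetSum (F := F) (s := range (n - j)) (fun k _ => hfi k) 0)
  rw [hsplit]
  filter_upwards [condExpDiff_add (F := F) hpastInt hfutureInt (j + 1 : ℕ), hfuture, hGsum]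
    with x h1 h2 h3
  rw [h1, Pi.add_apply, hpast, Pi.zero_apply, zero_add, h2]
  exact h3

lemma integral_sq_sum_sub_condExp_eq_sum (hθ : MeasurePreserving θ μ μ)
    (hFθ : ∀ n, F (n + 1) = (F n).comap θ) (hFle : ∀ n, F n ≤ m0) (hFmono : Monotone F)
    {f : X → ℝ} (hf : MemLp f 2 μ) (hfm : StronglyMeasurable[F 0] f) (n : ℕ) :
    ∫ x, ((∑ i ∈ Icc 1 n, f (θ^[i] x)) -
        μ[fun z => ∑ i ∈ Icc 1 n, f (θ^[i] z)|F 0] x) ^ 2 ∂μ =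
      ∑ K ∈ range n,
        ∫ x, (∑ k ∈ range (K + 1), condExpDiff μ F 0 (fun z => f (θ^[k] z)) x) ^ 2 ∂μ := by
  let ℱ : Filtration ℕ m0 :=
    ⟨fun j => F j, fun i j hij => hFmono (Int.ofNat_le.2 hij), fun j => hFle j⟩
  set S : X → ℝ := fun z => ∑ i ∈ Icc 1 n, f (θ^[i] z)
  have hfi : ∀ i, MemLp (fun x => f (θ^[i] x)) 2 μ :=
    fun i => hf.comp_measurePreserving (hθ.iterate i)
  have hS : MemLp S 2 μ := memLp_finsetSum _ fun i _ => hfi i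
  have hSn : μ[S|ℱ n] = S := by
    refine condExp_of_stronglyMeasurable (hFle _)
      (Finset.stronglyMeasurable_fun_sum _ fun i hi => ?_) (hS.integrable one_le_two)
    have := (mem_Icc.1 hi).2
    simpa using (stronglyMeasurable_comp_iterate hFθ hfm i).mono (hFmono (by omega))
  have hincr : ∀ j, ∫ x, (μ[S|ℱ (j + 1)] x - μ[S|ℱ j] x) ^ 2 ∂μ =
      ∫ x, (∑ k ∈ range (n - j), condExpDiff μ F 0 (fun z => f (θ^[k] z)) x) ^ 2 ∂μ := by
    intro j
    have hΔ : ∀ x, μ[S|ℱ (j + 1)] x - μ[S|ℱ j] x = condExpDiff μ F (j + 1 : ℕ) S x := by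
      simp [condExpDiff, ℱ]
    have hM : MemLp (fun x => ∑ k ∈ range (n - j), condExpDiff μ F 0 (fun z => f (θ^[k] z)) x)
        2 μ := memLp_finsetSum _ fun k _ => memLp_condExpDiff (hfi k) 0
    simp_rw [hΔ]
    refine (integral_congr_ae ?_).trans
      ((hθ.iterate (j + 1)).integral_comp_of_aestronglyMeasurable (hM.aestronglyMeasurable.pow 2))
    filter_upwards
      [condExpDiff_sum_iterate hθ hFθ hFle hFmono (hf.integrable one_le_two) hfm n j] with x hx
    rw [hx]
  calc ∫ x, (S x - μ[S|F 0] x) ^ 2 ∂μ = ∫ x, (μ[S|ℱ n] x - μ[S|ℱ 0] x) ^ 2 ∂μ := by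
        rw [hSn]
        rfl
    _ = ∑ j ∈ range n, ∫ x, (μ[S|ℱ (j + 1)] x - μ[S|ℱ j] x) ^ 2 ∂μ :=
        integral_sq_condExp_sub_condExp_zero_eq_sum ℱ hS n
    _ = _ := by
        rw [← sum_range_reflect]
        refine sum_congr rfl fun j hj => ?_
        rw [hincr, show n - (n - 1 - j) = j + 1 by have := mem_range.1 hj; omega]

end Stationary

theorem limiting_variance_general
    {X : Type*} [m0 : MeasurableSpace X] (μ : Measure X) [IsProbabilityMeasure μ]
    (θ : X → X) (hθ : MeasurePreserving θ μ μ)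
    (F : ℤ → MeasurableSpace X) (hFle : ∀ n, F n ≤ m0) (hFmono : Monotone F)
    (hFθ : ∀ n : ℤ, F (n + 1) = (F n).comap θ)
    (f : X → ℝ) (hf : MemLp f 2 μ) (hfmeas : StronglyMeasurable[F 0] f)
    (m : X → ℝ) (hm : MemLp m 2 μ)
    (hmlim : Tendsto (fun K : ℕ => eLpNorm (fun x => m x -
        ∑ k ∈ Finset.range K, (μ[fun z => f (θ^[k] z)|F 0]
          - μ[fun z => f (θ^[k] z)|F (-1)]) x) 2 μ) atTop (𝓝 0)) :
    Tendsto (fun n : ℕ =>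
        (∫ x, ((∑ j ∈ Finset.Icc 1 n, f (θ^[j] x)) -
          (μ[fun z => ∑ j ∈ Finset.Icc 1 n, f (θ^[j] z)|F 0]) x) ^ 2 ∂μ) / (n : ℝ))
      atTop (𝓝 (∫ x, (m x) ^ 2 ∂μ)) := by
  have hvar := integral_sq_sum_sub_condExp_eq_sum hθ hFθ hFle hFmono hf hfmeas
  have hM : ∀ K, MemLp (fun x => ∑ k ∈ Finset.range K,
      condExpDiff μ F 0 (fun z => f (θ^[k] z)) x) 2 μ := fun K =>
    memLp_finsetSum _ fun k _ => memLp_condExpDiff (hf.comp_measurePreserving (hθ.iterate k)) 0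
  have hlim := tendsto_integral_sq_of_tendsto_eLpNorm_sub hM hm hmlim
  refine ((hlim.comp (tendsto_add_atTop_nat 1)).cesaro).congr fun n => ?_
  rw [hvar, div_eq_inv_mul]
  rfl

/-- Under the Hannan condition, `σ² = lim_n E(S̄_n²)/n` exists and equals `‖m‖₂²`
where `m = ∑_{k≥0} P_0(f∘θ^k)`. -/
theorem limiting_variance
    {X : Type*} [m0 : MeasurableSpace X] (μ : Measure X) [IsProbabilityMeasure μ]
    (θ θi : X → X) (hθ : MeasurePreserving θ μ μ) (hθi : MeasurePreserving θi μ μ)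
    (hinv1 : Function.LeftInverse θi θ) (hinv2 : Function.RightInverse θi θ)
    (herg : Ergodic θ μ)
    (F : ℤ → MeasurableSpace X) (hFle : ∀ n, F n ≤ m0) (hFmono : Monotone F)
    (hFθ : ∀ n : ℤ, F (n + 1) = (F n).comap θ)
    (f : X → ℝ) (hf : MemLp f 2 μ) (hfmeas : StronglyMeasurable[F 0] f)
    (hHannan : ∑' i : ℕ, eLpNorm
      (μ[fun z => f (θ^[i] z)|F 0] - μ[fun z => f (θ^[i] z)|F (-1)]) 2 μ < ⊤)
    (m : X → ℝ) (hm : MemLp m 2 μ)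
    (hmlim : Tendsto (fun K : ℕ => eLpNorm (fun x => m x -
        ∑ k ∈ Finset.range K, (μ[fun z => f (θ^[k] z)|F 0]
          - μ[fun z => f (θ^[k] z)|F (-1)]) x) 2 μ) atTop (𝓝 0)) :
    Tendsto (fun n : ℕ =>
        (∫ x, ((∑ j ∈ Finset.Icc 1 n, f (θ^[j] x)) -
          (μ[fun z => ∑ j ∈ Finset.Icc 1 n, f (θ^[j] z)|F 0]) x) ^ 2 ∂μ) / (n : ℝ))
      atTop (𝓝 (∫ x, (m x) ^ 2 ∂μ)) :=
  limiting_variance_general (m0 := m0) μ θ hθ F hFle hFmono hFθ f hf hfmeas m hm hmlim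
end
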